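/- arXiv:1404.7388 — 4 statements merged into one kernel-verified Lean document; each statement's English description precedes it below -/
import Mathlib

section
/- Let W(u) = Σ_{n ∈ S} a_n · exp(⟪u, n⟫) with all a_n > 0. Suppose 0 lies in the interior of the convex hull of S. Then for every nonzero direction v ∈ ℝ^d, W(t·v) → +∞ as t → +∞. -/
theorem stmt_3 (d : ℕ) (hd : 0 < d)
    (S : Finset (EuclideanSpace ℝ (Fin d)))
    (h0 : (0 : EuclideanSpace ℝ (Fin d)) ∈ interior (convexHull ℝ (S : Set (EuclideanSpace ℝ (Fin d)))))
    (a : EuclideanSpace ℝ (Fin d) → ℝ) (ha : ∀ n ∈ S, 0 < a n)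
    (W : EuclideanSpace ℝ (Fin d) → ℝ)
    (hW : ∀ u, W u = ∑ n ∈ S, a n * Real.exp (inner ℝ u n))
    (v : EuclideanSpace ℝ (Fin d)) (hv : v ≠ 0) :
    Filter.Tendsto (fun t : ℝ => W (t • v)) Filter.atTop Filter.atTop := by
  -- find n₀ ∈ S with positive inner product with v
  have hex : ∃ n ∈ S, (0 : ℝ) < inner ℝ v n := by
    by_contra h
    push_neg at h
    have hlin : IsLinearMap ℝ (fun x : EuclideanSpace ℝ (Fin d) => (inner ℝ v x : ℝ)) :=
      ⟨fun x y => inner_add_right v x y, fun c x => real_inner_smul_right v x c⟩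
    have hconv : Convex ℝ {x : EuclideanSpace ℝ (Fin d) | (inner ℝ v x : ℝ) ≤ 0} :=
      convex_halfSpace_le hlin 0
    have hsub : convexHull ℝ (S : Set (EuclideanSpace ℝ (Fin d))) ⊆
        {x | (inner ℝ v x : ℝ) ≤ 0} :=
      convexHull_min (fun x hx => h x hx) hconv
    obtain ⟨ε, hε, hball⟩ := Metric.isOpen_iff.mp isOpen_interior 0 h0
    have hvnorm : (0 : ℝ) < ‖v‖ := norm_pos_iff.mpr hv
    set c : ℝ := ε / (2 * ‖v‖) with hc
    have hcpos : 0 < c := div_pos hε (by positivity)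
    have hmem : c • v ∈ Metric.ball (0 : EuclideanSpace ℝ (Fin d)) ε := by
      rw [Metric.mem_ball, dist_zero_right, norm_smul, Real.norm_of_nonneg hcpos.le, hc,
        div_mul_eq_mul_div, div_lt_iff₀ (by positivity)]
      nlinarith
    have : c • v ∈ convexHull ℝ (S : Set (EuclideanSpace ℝ (Fin d))) :=
      interior_subset (hball hmem)
    have hle := hsub this
    rw [Set.mem_setOf_eq, real_inner_smul_right, real_inner_self_eq_norm_sq] at hle
    exact absurd hle (not_le.mpr (mul_pos hcpos (pow_pos hvnorm 2)))
  obtain ⟨n₀, hn₀S, hc⟩ := hex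
  have key : ∀ t : ℝ, a n₀ * Real.exp (t * inner ℝ v n₀) ≤ W (t • v) := by
    intro t
    rw [hW]
    have h1 : a n₀ * Real.exp (t * inner ℝ v n₀) = a n₀ * Real.exp (inner ℝ (t • v) n₀) := by
      rw [real_inner_smul_left]
    rw [h1]
    exact Finset.single_le_sum
      (fun n hn => (mul_pos (ha n hn) (Real.exp_pos _)).le) hn₀S
  have hlow : Filter.Tendsto (fun t : ℝ => a n₀ * Real.exp (t * inner ℝ v n₀))
      Filter.atTop Filter.atTop := by
    apply Filter.Tendsto.const_mul_atTop (ha n₀ hn₀S)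
    exact Real.tendsto_exp_atTop.comp (Filter.tendsto_id.atTop_mul_const hc)
  exact Filter.tendsto_atTop_mono key hlow
end

section
/- Let W(u) = Σ_{n ∈ S} a_n · exp(⟪u, n⟫) with all a_n > 0, and suppose 0 lies in the interior of the convex hull of S. Then W(u) → +∞ as ‖u‖ → ∞; that is, for every M there exists R such that ‖u‖ > R implies W(u) > M. -/
theorem stmt_4 (d : ℕ) (hd : 0 < d)
    (S : Finset (EuclideanSpace ℝ (Fin d)))
    (h0 : (0 : EuclideanSpace ℝ (Fin d)) ∈ interior (convexHull ℝ (S : Set (EuclideanSpace ℝ (Fin d)))))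
    (a : EuclideanSpace ℝ (Fin d) → ℝ) (ha : ∀ n ∈ S, 0 < a n)
    (W : EuclideanSpace ℝ (Fin d) → ℝ)
    (hW : ∀ u, W u = ∑ n ∈ S, a n * Real.exp (inner ℝ u n)) :
    ∀ M : ℝ, ∃ R : ℝ, ∀ u : EuclideanSpace ℝ (Fin d), R < ‖u‖ → M < W u := by
  intro M
  obtain ⟨ε, hε, hball⟩ := Metric.mem_nhds_iff.mp (mem_interior_iff_mem_nhds.mp h0)
  have hS : S.Nonempty := by
    rcases S.eq_empty_or_nonempty with rfl | h
    · simpa using interior_subset h0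
    · exact h
  set m := S.inf' hS a with hm
  have hm0 : 0 < m := (Finset.lt_inf'_iff hS).mpr ha
  refine ⟨max 1 ((2/ε) * Real.log ((|M|+1)/m)), fun u hu => ?_⟩
  have hu1 : (1 : ℝ) < ‖u‖ := lt_of_le_of_lt (le_max_left _ _) hu
  have hnu : 0 < ‖u‖ := by linarith
  set c := S.sup' hS (fun n => (inner ℝ u n : ℝ)) with hc
  have hsub : convexHull ℝ (S : Set (EuclideanSpace ℝ (Fin d))) ⊆
      {x | (inner ℝ u x : ℝ) ≤ c} := by
    apply convexHull_min
    · intro n hn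
      exact Finset.le_sup' (fun n => (inner ℝ u n : ℝ)) hn
    · exact convex_halfSpace_le (innerSL ℝ u).toLinearMap.isLinear c
  have hv : (ε/(2*‖u‖)) • u ∈ Metric.ball (0 : EuclideanSpace ℝ (Fin d)) ε := by
    rw [Metric.mem_ball, dist_zero_right, norm_smul, Real.norm_eq_abs]
    rw [abs_of_pos (by positivity)]
    have heq : ε / (2 * ‖u‖) * ‖u‖ = ε / 2 := by field_simp
    rw [heq]; linarith
  have hineq : ε * ‖u‖ / 2 ≤ c := by
    have := hsub (hball hv)
    simp only [Set.mem_setOf_eq, real_inner_smul_right] at this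
    rw [real_inner_self_eq_norm_sq] at this
    have h2 : ε / (2 * ‖u‖) * ‖u‖ ^ 2 = ε * ‖u‖ / 2 := by
      field_simp
    linarith [h2 ▸ this]
  obtain ⟨n₀, hn₀, hn₀c⟩ := Finset.exists_mem_eq_sup' hS (fun n => (inner ℝ u n : ℝ))
  have hWU : a n₀ * Real.exp (inner ℝ u n₀) ≤ W u := by
    rw [hW]
    exact Finset.single_le_sum (f := fun n => a n * Real.exp (inner ℝ u n))
      (fun n hn => mul_nonneg (ha n hn).le (Real.exp_pos _).le) hn₀
  have han₀ : m ≤ a n₀ := Finset.inf'_le a hn₀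
  have hexp : Real.exp (ε * ‖u‖ / 2) ≤ Real.exp (inner ℝ u n₀) := by
    apply Real.exp_le_exp.mpr
    rw [hc, hn₀c] at hineq; exact hineq
  have key : m * Real.exp (ε * ‖u‖ / 2) ≤ W u := by
    calc m * Real.exp (ε * ‖u‖ / 2) ≤ a n₀ * Real.exp (inner ℝ u n₀) := by
          apply mul_le_mul han₀ hexp (le_of_lt (Real.exp_pos _)) (le_of_lt (ha n₀ hn₀))
      _ ≤ W u := hWU
  have hlog : (2/ε) * Real.log ((|M|+1)/m) < ‖u‖ := lt_of_le_of_lt (le_max_right _ _) hu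
  have hlog2 : Real.log ((|M|+1)/m) < ε * ‖u‖ / 2 := by
    have h1 := mul_lt_mul_of_pos_left hlog hε
    have h2 : ε * (2 / ε * Real.log ((|M|+1)/m)) = 2 * Real.log ((|M|+1)/m) := by
      field_simp
    rw [h2] at h1
    linarith
  have hMm : 0 < (|M|+1)/m := by positivity
  have : (|M|+1)/m < Real.exp (ε * ‖u‖ / 2) := by
    calc (|M|+1)/m = Real.exp (Real.log ((|M|+1)/m)) := (Real.exp_log hMm).symm
      _ < Real.exp (ε * ‖u‖ / 2) := Real.exp_lt_exp.mpr hlog2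
  have : |M| + 1 < m * Real.exp (ε * ‖u‖ / 2) := by
    rw [div_lt_iff₀ hm0] at this; linarith [this]
  have := le_abs_self M
  linarith [key]
end

section
/- Let W(u) = Σ_{n ∈ S} a_n · exp(⟪u, n⟫) with all a_n > 0, and suppose 0 lies in the interior of the convex hull of S. Then W attains a global minimum: there exists P ∈ ℝ^d with W(P) ≤ W(u) for all u ∈ ℝ^d. -/
theorem stmt_5 (d : ℕ) (hd : 0 < d)
    (S : Finset (EuclideanSpace ℝ (Fin d)))
    (h0 : (0 : EuclideanSpace ℝ (Fin d)) ∈ interior (convexHull ℝ (S : Set (EuclideanSpace ℝ (Fin d)))))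
    (a : EuclideanSpace ℝ (Fin d) → ℝ) (ha : ∀ n ∈ S, 0 < a n)
    (W : EuclideanSpace ℝ (Fin d) → ℝ)
    (hW : ∀ u, W u = ∑ n ∈ S, a n * Real.exp (inner ℝ u n)) :
    ∃ P : EuclideanSpace ℝ (Fin d), ∀ u, W P ≤ W u := by
  -- S is nonempty
  have hS : S.Nonempty := by
    by_contra h
    rw [Finset.not_nonempty_iff_eq_empty] at h
    simp [h] at h0
  -- get ε ball inside hull
  obtain ⟨ε, hε, hball⟩ := Metric.mem_nhds_iff.1 (mem_interior_iff_mem_nhds.1 h0)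
  set m := S.inf' hS a with hm
  have hmpos : 0 < m := (Finset.lt_inf'_iff hS).2 fun n hn => ha n hn
  set c := ε / 2 with hc
  have hcpos : 0 < c := by positivity
  -- key lower bound
  have key : ∀ u : EuclideanSpace ℝ (Fin d), m * Real.exp (c * ‖u‖) ≤ W u := by
    intro u
    -- find n ∈ S with c * ‖u‖ ≤ ⟪u, n⟫
    have hex : ∃ n ∈ S, c * ‖u‖ ≤ inner ℝ u n := by
      rcases eq_or_ne u 0 with rfl | hu
      · obtain ⟨n, hn⟩ := hS
        exact ⟨n, hn, by simp⟩
      · set v : EuclideanSpace ℝ (Fin d) := (c / ‖u‖) • u with hv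
        have hnu : (0:ℝ) < ‖u‖ := norm_pos_iff.2 hu
        have hvmem : v ∈ convexHull ℝ (S : Set (EuclideanSpace ℝ (Fin d))) := by
          apply hball
          simp only [Metric.mem_ball, dist_zero_right, hv, norm_smul]
          rw [Real.norm_eq_abs, abs_of_pos (by positivity), div_mul_cancel₀ _ hnu.ne']
          linarith
        have hconv : ConvexOn ℝ (Set.univ) (fun x : EuclideanSpace ℝ (Fin d) => (inner ℝ u x : ℝ)) := by
          apply LinearMap.convexOn (innerₛₗ ℝ u) convex_univ
        obtain ⟨n, hn, hle⟩ := hconv.exists_ge_of_mem_convexHull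
          (Set.subset_univ _) hvmem
        refine ⟨n, hn, le_trans (le_of_eq ?_) hle⟩
        rw [hv, real_inner_smul_right, real_inner_self_eq_norm_sq]
        field_simp
    obtain ⟨n, hn, hle⟩ := hex
    have h1 : m * Real.exp (c * ‖u‖) ≤ a n * Real.exp (inner ℝ u n) := by
      apply mul_le_mul (Finset.inf'_le a hn) (Real.exp_le_exp.2 hle)
        (Real.exp_pos _).le (ha n hn).le
    refine h1.trans ?_
    rw [hW]
    apply Finset.single_le_sum (fun i hi => ?_) hn
    exact mul_nonneg (ha i hi).le (Real.exp_pos _).le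
  -- continuity
  have hWc : Continuous W := by
    have : Continuous fun u : EuclideanSpace ℝ (Fin d) =>
        ∑ n ∈ S, a n * Real.exp (inner ℝ u n) := by
      apply continuous_finset_sum
      intro n _
      exact continuous_const.mul (Real.continuous_exp.comp (continuous_id.inner continuous_const))
    exact this.congr fun u => (hW u).symm
  -- coercivity
  have hlim : Filter.Tendsto W (Filter.cocompact _) Filter.atTop := by
    apply Filter.tendsto_atTop_mono key
    have h1 : Filter.Tendsto (fun t : ℝ => m * Real.exp (c * t)) Filter.atTop Filter.atTop := by
      apply Filter.Tendsto.const_mul_atTop hmpos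
      exact Real.tendsto_exp_atTop.comp (Filter.Tendsto.const_mul_atTop hcpos Filter.tendsto_id)
    exact h1.comp tendsto_norm_cocompact_atTop
  exact hWc.exists_forall_le hlim
end

section
/- Let W(u) = Σ_{n ∈ S} a_n · exp(⟪u, n⟫) with all a_n > 0. Suppose 0 lies in the interior of the convex hull of S (which forces S to span ℝ^d). Then W has exactly one critical point: there exists a unique P ∈ ℝ^d such that the derivative of W at P vanishes. -/
open Real

theorem stmt_6 (d : ℕ) (hd : 0 < d)
    (S : Finset (EuclideanSpace ℝ (Fin d)))
    (h0 : (0 : EuclideanSpace ℝ (Fin d)) ∈ interior (convexHull ℝ (S : Set (EuclideanSpace ℝ (Fin d)))))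
    (a : EuclideanSpace ℝ (Fin d) → ℝ) (ha : ∀ n ∈ S, 0 < a n)
    (W : EuclideanSpace ℝ (Fin d) → ℝ)
    (hW : ∀ u, W u = ∑ n ∈ S, a n * Real.exp (inner ℝ u n)) :
    ∃! P : EuclideanSpace ℝ (Fin d), fderiv ℝ W P = 0 := by
  -- S is nonempty
  have hSne : S.Nonempty := by
    by_contra h
    rw [Finset.not_nonempty_iff_eq_empty] at h
    simp [h] at h0
  -- derivative of W
  have hWfun : W = fun u => ∑ n ∈ S, a n * Real.exp (inner ℝ u n) := funext hW
  have hderiv : ∀ u : (EuclideanSpace ℝ (Fin d)), HasFDerivAt W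
      (∑ n ∈ S, (a n * Real.exp (inner ℝ u n)) • innerSL ℝ n) u := by
    intro u
    rw [hWfun]
    apply HasFDerivAt.fun_sum
    intro n _
    have h1 : HasFDerivAt (fun u : (EuclideanSpace ℝ (Fin d)) => (inner ℝ u n : ℝ)) (innerSL ℝ n) u := by
      have : (fun u : (EuclideanSpace ℝ (Fin d)) => (inner ℝ u n : ℝ)) = ⇑(innerSL ℝ n) := by
        funext w
        simp only [innerSL_apply_apply]
        exact real_inner_comm n w
      rw [this]
      exact (innerSL ℝ n).hasFDerivAt
    have h2 := h1.exp
    have h3 := h2.const_mul (a n)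
    simpa [smul_smul] using h3
  have hfd : ∀ u : (EuclideanSpace ℝ (Fin d)), fderiv ℝ W u = ∑ n ∈ S, (a n * Real.exp (inner ℝ u n)) • innerSL ℝ n :=
    fun u => (hderiv u).fderiv
  -- uniqueness part
  have hspan : Submodule.span ℝ (S : Set (EuclideanSpace ℝ (Fin d))) = ⊤ := by
    apply Submodule.eq_top_of_nonempty_interior'
    refine ⟨0, ?_⟩
    have hsub : convexHull ℝ (S : Set (EuclideanSpace ℝ (Fin d))) ⊆ (Submodule.span ℝ (S : Set (EuclideanSpace ℝ (Fin d))) : Set (EuclideanSpace ℝ (Fin d))) :=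
      convexHull_min Submodule.subset_span (Submodule.span ℝ (S : Set (EuclideanSpace ℝ (Fin d)))).convex
    exact interior_mono hsub h0
  have key : ∀ x y : (EuclideanSpace ℝ (Fin d)), fderiv ℝ W x = 0 → fderiv ℝ W y = 0 → x = y := by
    intro x y hx hy
    have hx' : ∑ n ∈ S, (a n * Real.exp (inner ℝ x n)) * (inner ℝ n (x - y) : ℝ) = 0 := by
      have := congrArg (fun L : (EuclideanSpace ℝ (Fin d)) →L[ℝ] ℝ => L (x - y)) ((hfd x).symm.trans hx)
      simpa using this
    have hy' : ∑ n ∈ S, (a n * Real.exp (inner ℝ y n)) * (inner ℝ n (x - y) : ℝ) = 0 := by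
      have := congrArg (fun L : (EuclideanSpace ℝ (Fin d)) →L[ℝ] ℝ => L (x - y)) ((hfd y).symm.trans hy)
      simpa using this
    have hsum : ∑ n ∈ S,
        a n * ((Real.exp (inner ℝ x n) - Real.exp (inner ℝ y n)) * ((inner ℝ x n : ℝ) - inner ℝ y n))
        = 0 := by
      have : ∀ n ∈ S,
          a n * ((Real.exp (inner ℝ x n) - Real.exp (inner ℝ y n)) * ((inner ℝ x n : ℝ) - inner ℝ y n))
          = (a n * Real.exp (inner ℝ x n)) * (inner ℝ n (x - y) : ℝ)
            - (a n * Real.exp (inner ℝ y n)) * (inner ℝ n (x - y) : ℝ) := by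
        intro n _
        have h1 : (inner ℝ n (x - y) : ℝ) = (inner ℝ x n : ℝ) - inner ℝ y n := by
          rw [inner_sub_right, real_inner_comm n x, real_inner_comm n y]
        rw [h1]; ring
      rw [Finset.sum_congr rfl this, Finset.sum_sub_distrib, hx', hy', sub_zero]
    have hnonneg : ∀ n ∈ S, 0 ≤
        a n * ((Real.exp (inner ℝ x n) - Real.exp (inner ℝ y n)) * ((inner ℝ x n : ℝ) - inner ℝ y n)) := by
      intro n hn
      apply mul_nonneg (ha n hn).le
      rcases le_total ((inner ℝ y n : ℝ)) (inner ℝ x n) with h | h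
      · exact mul_nonneg (sub_nonneg.2 (Real.exp_le_exp.2 h)) (sub_nonneg.2 h)
      · have h1 := Real.exp_le_exp.2 h
        nlinarith
    have heach := (Finset.sum_eq_zero_iff_of_nonneg hnonneg).1 hsum
    have hperp : ∀ n ∈ S, (inner ℝ n (x - y) : ℝ) = 0 := by
      intro n hn
      have h1 := heach n hn
      have h2 : (Real.exp (inner ℝ x n) - Real.exp (inner ℝ y n)) * ((inner ℝ x n : ℝ) - inner ℝ y n)
          = 0 := by
        rcases mul_eq_zero.1 h1 with h | h
        · exact absurd h (ha n hn).ne'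
        · exact h
      have h3 : (inner ℝ x n : ℝ) = inner ℝ y n := by
        by_contra hne
        have hexp : Real.exp (inner ℝ x n) ≠ Real.exp (inner ℝ y n) := fun h =>
          hne (Real.exp_eq_exp.1 h)
        exact mul_ne_zero (sub_ne_zero.2 hexp) (sub_ne_zero.2 hne) h2
      have e1 : (inner ℝ n (x - y) : ℝ) = (inner ℝ x n : ℝ) - inner ℝ y n := by
        rw [real_inner_comm, inner_sub_left]
      rw [e1, h3, sub_self]
    have hxy : x - y = 0 := by
      have hall : ∀ u : (EuclideanSpace ℝ (Fin d)), ∀ _ : u ∈ Submodule.span ℝ (S : Set (EuclideanSpace ℝ (Fin d))), (inner ℝ u (x - y) : ℝ) = 0 := by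
        intro u hu
        induction hu using Submodule.span_induction with
        | mem n hn => exact hperp n hn
        | zero => simp
        | add p q _ _ hp hq => rw [inner_add_left, hp, hq, add_zero]
        | smul c p _ hp => rw [real_inner_smul_left, hp, mul_zero]
      have hmem : x - y ∈ Submodule.span ℝ (S : Set (EuclideanSpace ℝ (Fin d))) := by
        rw [hspan]; trivial
      have := hall (x - y) hmem
      exact inner_self_eq_zero.1 this
    exact sub_eq_zero.1 hxy
  -- existence: coercivity
  obtain ⟨ε, hε, hball⟩ := Metric.isOpen_iff.1 isOpen_interior 0 h0
  have hball' : Metric.ball (0 : (EuclideanSpace ℝ (Fin d))) ε ⊆ convexHull ℝ (S : Set (EuclideanSpace ℝ (Fin d))) :=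
    hball.trans interior_subset
  have hcoer : ∀ u : (EuclideanSpace ℝ (Fin d)), ∃ n ∈ S, ε / 2 * ‖u‖ ≤ (inner ℝ u n : ℝ) := by
    intro u
    rcases eq_or_ne u 0 with rfl | hu
    · obtain ⟨n, hn⟩ := hSne
      exact ⟨n, hn, by simp⟩
    · have hconv : ConvexOn ℝ (Set.univ : Set (EuclideanSpace ℝ (Fin d))) (fun w => (inner ℝ u w : ℝ)) := by
        refine ⟨convex_univ, fun p _ q _ b c _ _ _ => le_of_eq ?_⟩
        show (inner ℝ u (b • p + c • q) : ℝ) = b • (inner ℝ u p : ℝ) + c • (inner ℝ u q : ℝ)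
        rw [inner_add_right, real_inner_smul_right, real_inner_smul_right, smul_eq_mul,
          smul_eq_mul]
      have hpt : (ε / 2 / ‖u‖) • u ∈ convexHull ℝ (S : Set (EuclideanSpace ℝ (Fin d))) := by
        apply hball'
        rw [Metric.mem_ball, dist_zero_right, norm_smul]
        have hnorm : ‖u‖ ≠ 0 := norm_ne_zero_iff.2 hu
        rw [Real.norm_eq_abs, abs_of_nonneg (by positivity), div_mul_cancel₀ _ hnorm]
        linarith
      obtain ⟨n, hn, hle⟩ := hconv.exists_ge_of_mem_convexHull (Set.subset_univ _) hpt
      refine ⟨n, hn, ?_⟩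
      have hval : (inner ℝ u ((ε / 2 / ‖u‖) • u) : ℝ) = ε / 2 * ‖u‖ := by
        rw [real_inner_smul_right, real_inner_self_eq_norm_sq]
        have hnorm : ‖u‖ ≠ 0 := norm_ne_zero_iff.2 hu
        field_simp
      rw [hval] at hle
      exact hle
  set c := S.inf' hSne a with hc
  have hcpos : 0 < c := (Finset.lt_inf'_iff hSne).2 fun n hn => ha n hn
  have hlb : ∀ u : (EuclideanSpace ℝ (Fin d)), c * Real.exp (ε / 2 * ‖u‖) ≤ W u := by
    intro u
    obtain ⟨n, hn, hle⟩ := hcoer u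
    rw [hW]
    calc c * Real.exp (ε / 2 * ‖u‖) ≤ a n * Real.exp (inner ℝ u n) := by
          apply mul_le_mul (Finset.inf'_le a hn) (Real.exp_le_exp.2 hle)
            (Real.exp_pos _).le (ha n hn).le
      _ ≤ ∑ m ∈ S, a m * Real.exp (inner ℝ u m) :=
          Finset.single_le_sum (fun m hm => mul_nonneg (ha m hm).le (Real.exp_pos _).le) hn
  have hcont : Continuous W := by
    rw [hWfun]
    apply continuous_finset_sum
    intro n _
    exact continuous_const.mul (Real.continuous_exp.comp
      (Continuous.inner continuous_id continuous_const))
  have htend : Filter.Tendsto W (Filter.cocompact (EuclideanSpace ℝ (Fin d))) Filter.atTop := by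
    apply Filter.tendsto_atTop_mono hlb
    apply Filter.Tendsto.const_mul_atTop hcpos
    apply Real.tendsto_exp_atTop.comp
    apply Filter.Tendsto.const_mul_atTop (by linarith : (0:ℝ) < ε / 2)
    exact tendsto_norm_cocompact_atTop
  obtain ⟨P, hP⟩ := hcont.exists_forall_le htend
  have hPmin : IsLocalMin W P := (isMinOn_univ_iff.2 hP).isLocalMin Filter.univ_mem
  exact ⟨P, hPmin.fderiv_eq_zero, fun Q hQ => key Q P hQ hPmin.fderiv_eq_zero⟩
end
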